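/- Let T > 0 and let u⁺, u⁻ : ℝ × [0,T] → ℝ and η, G : ℝ × ℝ × [0,T] → ℝ be smooth functions. Assume u⁺ and u⁻ solve the BBM equation ∂_t u + ∂_x u + u ∂_x u − ∂_x∂_x∂_t u = 0 on ℝ × [0,T], and that η solves the integrated BBM-KP equation ∂_t η + ∂_x η + η ∂_x η − ∂_x∂_x∂_t η = G on ℝ × ℝ × [0,T]. Define w(x,y,t) = η(x,y,t) − (1/2)(u⁺(x,t)+u⁻(x,t)) − (1/2)(u⁺(x,t)−u⁻(x,t))·tanh y. Then w satisfies, at every point (x,y,t), ∂_t w + ∂_x w − ∂_x∂_x∂_t w − G + w ∂_x w + (1/2)(1 + tanh y)·∂_x(u⁺ w) + (1/2)(1 − tanh y)·∂_x(u⁻ w) − (1/4)(1 − tanh² y)·(u⁺ ∂_x u⁺ + u⁻ ∂_x u⁻ − u⁺ ∂_x u⁻ − u⁻ ∂_x u⁺) = 0. -/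

import Mathlib

open Set Real

/-- Partial derivative in the first (spatial) variable of a function of `(x, t)`. -/
noncomputable def pdX (u : ℝ → ℝ → ℝ) (x t : ℝ) : ℝ := deriv (fun x' => u x' t) x

/-- Partial derivative in the second (time) variable of a function of `(x, t)`. -/
noncomputable def pdT (u : ℝ → ℝ → ℝ) (x t : ℝ) : ℝ := deriv (fun t' => u x t') t

/-- Partial derivative in `x` of a function of `(x, y, t)`. -/
noncomputable def pdX3 (η : ℝ → ℝ → ℝ → ℝ) (x y t : ℝ) : ℝ := deriv (fun x' => η x' y t) x

/-- Partial derivative in `t` of a function of `(x, y, t)`. -/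
noncomputable def pdT3 (η : ℝ → ℝ → ℝ → ℝ) (x y t : ℝ) : ℝ := deriv (fun t' => η x y t') t

/- Auxiliary machinery -/

lemma aux_clm {E : Type*} [NormedAddCommGroup E] [NormedSpace ℝ E] {f : E → ℝ}
    (hf : ContDiff ℝ (⊤ : ℕ∞) f) (v : E) : ContDiff ℝ (⊤ : ℕ∞) (fun p => fderiv ℝ f p v) :=
  (hf.fderiv_right (by simp)).clm_apply contDiff_const

noncomputable def DX2 (f : ℝ × ℝ → ℝ) : ℝ × ℝ → ℝ := fun p => fderiv ℝ f p (1, 0)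
noncomputable def DT2 (f : ℝ × ℝ → ℝ) : ℝ × ℝ → ℝ := fun p => fderiv ℝ f p (0, 1)
def unc (u : ℝ → ℝ → ℝ) : ℝ × ℝ → ℝ := fun p => u p.1 p.2

lemma contDiff_DX2 {f : ℝ × ℝ → ℝ} (hf : ContDiff ℝ (⊤ : ℕ∞) f) : ContDiff ℝ (⊤ : ℕ∞) (DX2 f) := aux_clm hf _
lemma contDiff_DT2 {f : ℝ × ℝ → ℝ} (hf : ContDiff ℝ (⊤ : ℕ∞) f) : ContDiff ℝ (⊤ : ℕ∞) (DT2 f) := aux_clm hf _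

lemma hasDerivAt_X2 {f : ℝ × ℝ → ℝ} (hf : Differentiable ℝ f) (x t : ℝ) :
    HasDerivAt (fun x' => f (x', t)) (DX2 f (x, t)) x :=
  (hf (x, t)).hasFDerivAt.comp_hasDerivAt x ((hasDerivAt_id x).prodMk (hasDerivAt_const x t))

lemma hasDerivAt_T2 {f : ℝ × ℝ → ℝ} (hf : Differentiable ℝ f) (x t : ℝ) :
    HasDerivAt (fun t' => f (x, t')) (DT2 f (x, t)) t :=
  (hf (x, t)).hasFDerivAt.comp_hasDerivAt t ((hasDerivAt_const t x).prodMk (hasDerivAt_id t))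

lemma pdX_unc {u : ℝ → ℝ → ℝ} (hu : Differentiable ℝ (unc u)) (x t : ℝ) :
    pdX u x t = DX2 (unc u) (x, t) := (hasDerivAt_X2 hu x t).deriv

lemma pdT_unc {u : ℝ → ℝ → ℝ} (hu : Differentiable ℝ (unc u)) (x t : ℝ) :
    pdT u x t = DT2 (unc u) (x, t) := (hasDerivAt_T2 hu x t).deriv

lemma pdXT_unc {u : ℝ → ℝ → ℝ} (hu : ContDiff ℝ (⊤ : ℕ∞) (unc u)) (x t : ℝ) :
    pdX (pdT u) x t = DX2 (DT2 (unc u)) (x, t) := by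
  have h : (fun x' => pdT u x' t) = fun x' => DT2 (unc u) (x', t) :=
    funext fun x' => pdT_unc (hu.differentiable (by simp)) x' t
  show deriv (fun x' => pdT u x' t) x = _
  rw [h]
  exact (hasDerivAt_X2 ((contDiff_DT2 hu).differentiable (by simp)) x t).deriv

lemma pdXXT_unc {u : ℝ → ℝ → ℝ} (hu : ContDiff ℝ (⊤ : ℕ∞) (unc u)) (x t : ℝ) :
    pdX (pdX (pdT u)) x t = DX2 (DX2 (DT2 (unc u))) (x, t) := by
  have h : (fun x' => pdX (pdT u) x' t) = fun x' => DX2 (DT2 (unc u)) (x', t) :=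
    funext fun x' => pdXT_unc hu x' t
  show deriv (fun x' => pdX (pdT u) x' t) x = _
  rw [h]
  exact (hasDerivAt_X2 ((contDiff_DX2 (contDiff_DT2 hu)).differentiable (by simp)) x t).deriv

/-- X-derivative of the combination `f - (1/2)(g+h) - (1/2)(g-h)c` along a slice. -/
lemma comb_X {f g h : ℝ × ℝ → ℝ} (hf : Differentiable ℝ f) (hg : Differentiable ℝ g)
    (hh : Differentiable ℝ h) (c x t : ℝ) :
    HasDerivAt (fun x' => f (x', t) - (1/2) * (g (x', t) + h (x', t))
        - (1/2) * (g (x', t) - h (x', t)) * c)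
      (DX2 f (x, t) - (1/2) * (DX2 g (x, t) + DX2 h (x, t))
        - (1/2) * (DX2 g (x, t) - DX2 h (x, t)) * c) x :=
  ((hasDerivAt_X2 hf x t).sub
      (((hasDerivAt_X2 hg x t).add (hasDerivAt_X2 hh x t)).const_mul _)).sub
    ((((hasDerivAt_X2 hg x t).sub (hasDerivAt_X2 hh x t)).const_mul _).mul_const c)

/-- T-derivative of the combination `f - (1/2)(g+h) - (1/2)(g-h)c` along a slice. -/
lemma comb_T {f g h : ℝ × ℝ → ℝ} (hf : Differentiable ℝ f) (hg : Differentiable ℝ g)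
    (hh : Differentiable ℝ h) (c x t : ℝ) :
    HasDerivAt (fun t' => f (x, t') - (1/2) * (g (x, t') + h (x, t'))
        - (1/2) * (g (x, t') - h (x, t')) * c)
      (DT2 f (x, t) - (1/2) * (DT2 g (x, t) + DT2 h (x, t))
        - (1/2) * (DT2 g (x, t) - DT2 h (x, t)) * c) t :=
  ((hasDerivAt_T2 hf x t).sub
      (((hasDerivAt_T2 hg x t).add (hasDerivAt_T2 hh x t)).const_mul _)).sub
    ((((hasDerivAt_T2 hg x t).sub (hasDerivAt_T2 hh x t)).const_mul _).mul_const c)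

/-- The two-variable master computation: if `e` solves the (point) equation with right side `g`,
`a` and `b` solve the BBM equation at the point, and `v = e - (1/2)(a+b) - (1/2)(a-b)c`, then `v`
solves the modified equation. -/
lemma key (e a b v : ℝ → ℝ → ℝ) (c g : ℝ)
    (he : ContDiff ℝ (⊤ : ℕ∞) (unc e)) (ha : ContDiff ℝ (⊤ : ℕ∞) (unc a)) (hb : ContDiff ℝ (⊤ : ℕ∞) (unc b))
    (hv : ∀ x t, v x t = e x t - (1/2) * (a x t + b x t) - (1/2) * (a x t - b x t) * c)
    (x t : ℝ)
    (hee : pdT e x t + pdX e x t + e x t * pdX e x t - pdX (pdX (pdT e)) x t = g)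
    (hae : pdT a x t + pdX a x t + a x t * pdX a x t - pdX (pdX (pdT a)) x t = 0)
    (hbe : pdT b x t + pdX b x t + b x t * pdX b x t - pdX (pdX (pdT b)) x t = 0) :
    pdT v x t + pdX v x t - pdX (pdX (pdT v)) x t - g
      + v x t * pdX v x t
      + (1/2) * (1 + c) * pdX (fun x' t' => a x' t' * v x' t') x t
      + (1/2) * (1 - c) * pdX (fun x' t' => b x' t' * v x' t') x t
      - (1/4) * (1 - c^2) * (a x t * pdX a x t + b x t * pdX b x t
          - a x t * pdX b x t - b x t * pdX a x t) = 0 := by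
  have de : Differentiable ℝ (unc e) := he.differentiable (by simp)
  have da : Differentiable ℝ (unc a) := ha.differentiable (by simp)
  have db : Differentiable ℝ (unc b) := hb.differentiable (by simp)
  -- first derivatives of v
  have hvT : ∀ x t : ℝ, pdT v x t = DT2 (unc e) (x, t)
      - (1/2) * (DT2 (unc a) (x, t) + DT2 (unc b) (x, t))
      - (1/2) * (DT2 (unc a) (x, t) - DT2 (unc b) (x, t)) * c := by
    intro x t
    have hfn : (fun t' => v x t') = fun t' => unc e (x, t') - (1/2) * (unc a (x, t') + unc b (x, t'))
        - (1/2) * (unc a (x, t') - unc b (x, t')) * c := funext fun t' => hv x t'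
    show deriv (fun t' => v x t') t = _
    rw [hfn]
    exact (comb_T de da db c x t).deriv
  have hvXd : ∀ x t : ℝ, HasDerivAt (fun x' => v x' t)
      (DX2 (unc e) (x, t) - (1/2) * (DX2 (unc a) (x, t) + DX2 (unc b) (x, t))
        - (1/2) * (DX2 (unc a) (x, t) - DX2 (unc b) (x, t)) * c) x := by
    intro x t
    have hfn : (fun x' => v x' t) = fun x' => unc e (x', t) - (1/2) * (unc a (x', t) + unc b (x', t))
        - (1/2) * (unc a (x', t) - unc b (x', t)) * c := funext fun x' => hv x' t
    rw [hfn]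
    exact comb_X de da db c x t
  have hvX : ∀ x t : ℝ, pdX v x t = DX2 (unc e) (x, t)
      - (1/2) * (DX2 (unc a) (x, t) + DX2 (unc b) (x, t))
      - (1/2) * (DX2 (unc a) (x, t) - DX2 (unc b) (x, t)) * c := fun x t => (hvXd x t).deriv
  -- second derivative pdX (pdT v)
  have dET := (contDiff_DT2 he).differentiable (by simp)
  have dAT := (contDiff_DT2 ha).differentiable (by simp)
  have dBT := (contDiff_DT2 hb).differentiable (by simp)
  have hvXT : ∀ x t : ℝ, pdX (pdT v) x t = DX2 (DT2 (unc e)) (x, t)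
      - (1/2) * (DX2 (DT2 (unc a)) (x, t) + DX2 (DT2 (unc b)) (x, t))
      - (1/2) * (DX2 (DT2 (unc a)) (x, t) - DX2 (DT2 (unc b)) (x, t)) * c := by
    intro x t
    have hfn : (fun x' => pdT v x' t) = fun x' => DT2 (unc e) (x', t)
        - (1/2) * (DT2 (unc a) (x', t) + DT2 (unc b) (x', t))
        - (1/2) * (DT2 (unc a) (x', t) - DT2 (unc b) (x', t)) * c := funext fun x' => hvT x' t
    show deriv (fun x' => pdT v x' t) x = _
    rw [hfn]
    exact (comb_X dET dAT dBT c x t).deriv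
  have dETX := (contDiff_DX2 (contDiff_DT2 he)).differentiable (by simp)
  have dATX := (contDiff_DX2 (contDiff_DT2 ha)).differentiable (by simp)
  have dBTX := (contDiff_DX2 (contDiff_DT2 hb)).differentiable (by simp)
  have hvXXT : pdX (pdX (pdT v)) x t = DX2 (DX2 (DT2 (unc e))) (x, t)
      - (1/2) * (DX2 (DX2 (DT2 (unc a))) (x, t) + DX2 (DX2 (DT2 (unc b))) (x, t))
      - (1/2) * (DX2 (DX2 (DT2 (unc a))) (x, t) - DX2 (DX2 (DT2 (unc b))) (x, t)) * c := by
    have hfn : (fun x' => pdX (pdT v) x' t) = fun x' => DX2 (DT2 (unc e)) (x', t)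
        - (1/2) * (DX2 (DT2 (unc a)) (x', t) + DX2 (DT2 (unc b)) (x', t))
        - (1/2) * (DX2 (DT2 (unc a)) (x', t) - DX2 (DT2 (unc b)) (x', t)) * c :=
      funext fun x' => hvXT x' t
    show deriv (fun x' => pdX (pdT v) x' t) x = _
    rw [hfn]
    exact (comb_X dETX dATX dBTX c x t).deriv
  -- product rules
  have hPa : pdX (fun x' t' => a x' t' * v x' t') x t
      = DX2 (unc a) (x, t) * v x t + a x t * pdX v x t := by
    have h : HasDerivAt (fun x' => a x' t) (DX2 (unc a) (x, t)) x := hasDerivAt_X2 da x t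
    have := h.mul (hvXd x t)
    rw [hvX x t]
    exact this.deriv
  have hPb : pdX (fun x' t' => b x' t' * v x' t') x t
      = DX2 (unc b) (x, t) * v x t + b x t * pdX v x t := by
    have h : HasDerivAt (fun x' => b x' t) (DX2 (unc b) (x, t)) x := hasDerivAt_X2 db x t
    have := h.mul (hvXd x t)
    rw [hvX x t]
    exact this.deriv
  -- convert e, a, b derivatives in hypotheses and finish by algebra
  rw [pdT_unc de, pdX_unc de, pdXXT_unc he] at hee
  rw [pdT_unc da, pdX_unc da, pdXXT_unc ha] at hae
  rw [pdT_unc db, pdX_unc db, pdXXT_unc hb] at hbe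
  rw [hvT x t, hvX x t, hvXXT, hPa, hPb, hvX x t, hv x t,
    pdX_unc da, pdX_unc db]
  linear_combination hee - (1 + c) / 2 * hae - (1 - c) / 2 * hbe

/-- If `u⁺, u⁻` solve the BBM equation `u_t + u_x + u u_x − u_{xxt} = 0` on `ℝ × [0,T]` and `η`
solves the integrated BBM-KP equation `η_t + η_x + η η_x − η_{xxt} = G`, then the difference
`w = η − (1/2)(u⁺+u⁻) − (1/2)(u⁺−u⁻)tanh y` satisfies the modified equation (5.2). -/
theorem stmt_4 (T : ℝ) (hT : 0 < T)
    (up um : ℝ → ℝ → ℝ) (η G : ℝ → ℝ → ℝ → ℝ)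
    (hup : ContDiff ℝ (⊤ : ℕ∞) (fun p : ℝ × ℝ => up p.1 p.2))
    (hum : ContDiff ℝ (⊤ : ℕ∞) (fun p : ℝ × ℝ => um p.1 p.2))
    (hη : ContDiff ℝ (⊤ : ℕ∞) (fun p : ℝ × ℝ × ℝ => η p.1 p.2.1 p.2.2))
    (hG : ContDiff ℝ (⊤ : ℕ∞) (fun p : ℝ × ℝ × ℝ => G p.1 p.2.1 p.2.2))
    (hBBMp : ∀ x : ℝ, ∀ t ∈ Set.Icc (0 : ℝ) T,
      pdT up x t + pdX up x t + up x t * pdX up x t - pdX (pdX (pdT up)) x t = 0)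
    (hBBMm : ∀ x : ℝ, ∀ t ∈ Set.Icc (0 : ℝ) T,
      pdT um x t + pdX um x t + um x t * pdX um x t - pdX (pdX (pdT um)) x t = 0)
    (hKP : ∀ x y : ℝ, ∀ t ∈ Set.Icc (0 : ℝ) T,
      pdT3 η x y t + pdX3 η x y t + η x y t * pdX3 η x y t
        - pdX3 (pdX3 (pdT3 η)) x y t = G x y t)
    (w : ℝ → ℝ → ℝ → ℝ)
    (hw : ∀ x y t : ℝ, w x y t = η x y t - (1 / 2) * (up x t + um x t)
        - (1 / 2) * (up x t - um x t) * Real.tanh y) :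
    ∀ x y : ℝ, ∀ t ∈ Set.Icc (0 : ℝ) T,
      pdT3 w x y t + pdX3 w x y t - pdX3 (pdX3 (pdT3 w)) x y t - G x y t
        + w x y t * pdX3 w x y t
        + (1 / 2) * (1 + Real.tanh y) * pdX3 (fun x' y' t' => up x' t' * w x' y' t') x y t
        + (1 / 2) * (1 - Real.tanh y) * pdX3 (fun x' y' t' => um x' t' * w x' y' t') x y t
        - (1 / 4) * (1 - Real.tanh y ^ 2) *
            (up x t * pdX up x t + um x t * pdX um x t
              - up x t * pdX um x t - um x t * pdX up x t) = 0 := by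
  intro x y t ht
  have he : ContDiff ℝ (⊤ : ℕ∞) (fun p : ℝ × ℝ => η p.1 y p.2) :=
    hη.comp (contDiff_fst.prodMk (contDiff_const.prodMk contDiff_snd))
  exact key (fun x' t' => η x' y t') up um (fun x' t' => w x' y t') (Real.tanh y) (G x y t)
    he hup hum (fun x' t' => hw x' y t') x t (hKP x y t ht) (hBBMp x t ht) (hBBMm x t ht)
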